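/- arXiv:1109.2240 — 2 statements merged into one kernel-verified Lean document; each statement's English description precedes it below -/
import Mathlib

section
/- Let A ∈ K^{5×2} be a matrix each of whose two columns contains a nonzero entry, and suppose that deg(a_{p1}a_{q2} − a_{q1}a_{p2}) = min(deg a_{p1} + deg a_{q2}, deg a_{q1} + deg a_{p2}) for all distinct p,q ∈ {1,…,5}. Let (h_1,…,h_5) ∈ ℝ^5, and for i ∈ {1,2} let Θ_i denote the set of indices η ∈ {1,…,5} attaining the minimum min_{μ=1}^5 (deg a_{μi} + h_μ). If |Θ_1| ≥ 2, |Θ_2| ≥ 2, and |Θ_1 ∪ Θ_2| ≥ 3, then there exist x_1,…,x_5 ∈ K with deg x_j = h_j for every j ∈ {1,…,5} and Σ_{j=1}^5 a_{ji} x_j = 0 for i = 1 and i = 2. -/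
noncomputable section

/-- The field of generalized power series over ℝ with complex coefficients. -/
abbrev K : Type := HahnSeries ℝ ℂ

open Classical in
/-- The degree of an element of `K`: the least exponent of its support, `⊤` for `0`. -/
noncomputable def Kdeg (a : K) : WithTop ℝ :=
  if a = 0 then ⊤ else ((HahnSeries.order a : ℝ) : WithTop ℝ)

/-- A square real matrix is tropically non-singular if the minimum in the tropical
permanent is attained by exactly one permutation. -/
def TropNonsing {k : ℕ} (S : Matrix (Fin k) (Fin k) ℝ) : Prop :=
  ∃! σ : Equiv.Perm (Fin k), ∀ τ : Equiv.Perm (Fin k),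
    (∑ i, S i (σ i)) ≤ ∑ i, S i (τ i)

/-- The tropical rank: the largest size of a tropically non-singular square submatrix. -/
noncomputable def tropRank {m n : ℕ} (A : Matrix (Fin m) (Fin n) ℝ) : ℕ :=
  sSup {r : ℕ | ∃ (ρ : Fin r → Fin m) (c : Fin r → Fin n),
    Function.Injective ρ ∧ Function.Injective c ∧ TropNonsing (A.submatrix ρ c)}

/-- A matrix over `K` is a lift of a real matrix if degrees of entries match. -/
def IsLift {m n : ℕ} (F : Matrix (Fin m) (Fin n) K) (B : Matrix (Fin m) (Fin n) ℝ) : Prop :=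
  ∀ i j, Kdeg (F i j) = (B i j : WithTop ℝ)

/-- The Kapranov rank: the smallest rank over `K` of a lift. -/
noncomputable def kapRank {m n : ℕ} (B : Matrix (Fin m) (Fin n) ℝ) : ℕ :=
  sInf {r : ℕ | ∃ F : Matrix (Fin m) (Fin n) K, IsLift F B ∧ F.rank = r}

/-- The tuple `lam` realizes the tropical dependence of the rows of `A`. -/
def Realizes {m n : ℕ} (lam : Fin m → WithTop ℝ) (A : Matrix (Fin m) (Fin n) ℝ) : Prop :=
  (∃ τ, lam τ ≠ ⊤) ∧
  ∀ k : Fin n, ∃ τ₁ τ₂ : Fin m, τ₁ ≠ τ₂ ∧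
    (∀ τ, lam τ₁ + (A τ₁ k : WithTop ℝ) ≤ lam τ + (A τ k : WithTop ℝ)) ∧
    (∀ τ, lam τ₂ + (A τ₂ k : WithTop ℝ) ≤ lam τ + (A τ k : WithTop ℝ))

open Classical in
/-- The pattern of a real matrix, with entries in `{0, ∞} ⊆ ℝ ∪ {∞}`. -/
noncomputable def pat {m n : ℕ} (A : Matrix (Fin m) (Fin n) ℝ) (u : Fin m) (v : Fin n) :
    WithTop ℝ :=
  if ∀ i, A u v ≤ A i v then 0 else ⊤

/-- The support of the `j`-th column of the pattern of `A`. -/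
def colSupp {m n : ℕ} (A : Matrix (Fin m) (Fin n) ℝ) (j : Fin n) : Set (Fin m) :=
  {u | ∀ i, A u j ≤ A i j}

/-!
For each index `j`, choose `q ∈ Θ 0` and `r ∈ Θ 1` with `j, q, r` pairwise distinct. Writing
`M p p'` for the `2 × 2` minor on rows `p, p'`, the vector `M q r • e j - M j r • e q + M j q • e r`
solves both equations: its pairing with a column of `A` is a `3 × 3` determinant with a repeated
column. Minimality of `q` and `r` bounds every weighted minor `deg M p p' + h p + h p'` from below by
`deg A q 0 + deg A r 1 + h q + h r`, and the hypothesis on minors makes `deg M q r` attain this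
bound; so after multiplying by a power of `t` the vector has degree exactly `h j` at `j` and at
least `h l` at every `l`. Among the solutions of degree at least `h` in every coordinate, those
whose `l`-th coordinate has degree `> h l` form a proper `ℂ`-subspace, and a vector space over an
infinite field is not a finite union of proper subspaces.
-/

open HahnSeries Matrix

theorem Kdeg_eq_orderTop (a : K) : Kdeg a = a.orderTop := by
  unfold Kdeg
  split_ifs with ha
  · simp [ha]
  · exact order_eq_orderTop_of_ne_zero ha

theorem Set.exists_mem_mem_ne_of_ncard {α : Type*} {s t : Set α} (hs : 2 ≤ s.ncard)
    (ht : 2 ≤ t.ncard) (hst : 3 ≤ (s ∪ t).ncard) (a : α) :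
    ∃ q ∈ s, ∃ r ∈ t, q ≠ r ∧ q ≠ a ∧ r ≠ a := by
  obtain ⟨q, hq, hqa⟩ := Set.exists_ne_of_one_lt_ncard (s := s) (by omega) a
  obtain ⟨r, hr, hra⟩ := Set.exists_ne_of_one_lt_ncard (s := t) (by omega) a
  rcases ne_or_eq q r with hqr | rfl
  · exact ⟨q, hq, r, hr, hqr, hqa, hra⟩
  obtain ⟨u, hu, hua, huq⟩ : ∃ u ∈ s ∪ t, u ≠ a ∧ u ≠ q := by
    by_contra! hsub
    have : (s ∪ t).ncard ≤ ({a, q} : Set α).ncard :=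
      Set.ncard_le_ncard (fun u hu => by by_cases hua : u = a <;> simp_all) (Set.toFinite _)
    have := Set.ncard_insert_le a ({q} : Set α)
    simp only [Set.ncard_singleton] at this
    omega
  rcases hu with hu | hu
  · exact ⟨u, hu, q, hr, huq, hua, hqa⟩
  · exact ⟨q, hq, u, hu, huq.symm, hqa, hua⟩

theorem HahnSeries.exists_mul_orderTop_eq {Γ R κ : Type*} [AddCommGroup Γ] [LinearOrder Γ]
    [IsOrderedAddMonoid Γ] [CommRing R] [Nontrivial R] [NoZeroDivisors R]
    {y : κ → HahnSeries Γ R} {h : κ → Γ} {j : κ} (hy : y j ≠ 0)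
    (hle : ∀ l, (y j).orderTop + h l ≤ (y l).orderTop + h j) :
    ∃ c : HahnSeries Γ R, (∀ l, (h l : WithTop Γ) ≤ (c * y l).orderTop) ∧
      (c * y j).orderTop = h j := by
  obtain ⟨g, hg⟩ := WithTop.ne_top_iff_exists.mp (orderTop_ne_top.2 hy)
  refine ⟨single (h j - g) 1, fun l => ?_, ?_⟩
  · rw [orderTop_mul, orderTop_single one_ne_zero]
    refine (WithTop.add_le_add_iff_right (WithTop.coe_ne_top (a := g))).mp ?_
    calc (h l : WithTop Γ) + g = (y j).orderTop + h l := by rw [← hg, add_comm]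
      _ ≤ (y l).orderTop + h j := hle l
      _ = ↑(h j - g) + (y l).orderTop + g := by
        rw [add_right_comm, ← WithTop.coe_add, sub_add_cancel, add_comm]
  · rw [orderTop_mul, orderTop_single one_ne_zero, ← hg, ← WithTop.coe_add, sub_add_cancel]

theorem HahnSeries.exists_forall_orderTop_eq {Γ R κ : Type*} [AddCommMonoid Γ] [LinearOrder Γ]
    [IsOrderedCancelAddMonoid Γ] [Field R] [Infinite R] [Finite κ]
    (V : Submodule (HahnSeries Γ R) (κ → HahnSeries Γ R)) (h : κ → Γ)
    (hV : ∀ j, ∃ w ∈ V, (∀ l, (h l : WithTop Γ) ≤ (w l).orderTop) ∧ (w j).orderTop = h j) :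
    ∃ x ∈ V, ∀ l, (x l).orderTop = h l := by
  let U : Submodule R (κ → HahnSeries Γ R) :=
    { carrier := {x | x ∈ V ∧ ∀ l, (h l : WithTop Γ) ≤ (x l).orderTop}
      add_mem' := fun {x y} hx hy => ⟨V.add_mem hx.1 hy.1, fun l =>
        (le_min (hx.2 l) (hy.2 l)).trans min_orderTop_le_orderTop_add⟩
      zero_mem' := ⟨V.zero_mem, fun l => by simp⟩
      smul_mem' := fun c x hx => ⟨by
        simpa only [Pi.smul_def, smul_eq_mul, C_mul_eq_smul] using V.smul_mem (C c) hx.1,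
        fun l => (hx.2 l).trans (orderTop_le_orderTop_smul c (x l))⟩ }
  let P : κ → Submodule R U := fun l =>
    LinearMap.ker ((coeff.linearMap (h l)).comp ((LinearMap.proj l).comp U.subtype))
  have hP : ∀ l, P l ≠ ⊤ := by
    intro l hl
    obtain ⟨w, hwV, hwh, hwl⟩ := hV l
    have hw : (⟨w, hwV, hwh⟩ : U) ∈ P l := hl ▸ Submodule.mem_top
    exact coeff_orderTop_ne hwl hw
  obtain ⟨⟨x, hxV, hxh⟩, hx⟩ : ∃ x : U, ∀ l, x ∉ P l := by
    by_contra! hcov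
    obtain ⟨l, hl⟩ := Subspace.exists_eq_top_of_iUnion_eq_univ
      (Set.eq_univ_of_forall fun x => Set.mem_iUnion.mpr (hcov x))
    exact hP l hl
  exact ⟨x, hxV, fun l => le_antisymm (orderTop_le_of_coeff_ne_zero (hx l)) (hxh l)⟩

namespace Matrix

variable {ι R : Type*}

def rowMinor [CommRing R] (A : Matrix ι (Fin 2) R) (p q : ι) : R :=
  A p 0 * A q 1 - A q 0 * A p 1

def crossVec [CommRing R] [DecidableEq ι] (A : Matrix ι (Fin 2) R) (j q r : ι) : ι → R :=
  Pi.single j (rowMinor A q r) - Pi.single q (rowMinor A j r) + Pi.single r (rowMinor A j q)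

theorem transpose_mulVec_crossVec [CommRing R] [DecidableEq ι] [Fintype ι] (A : Matrix ι (Fin 2) R)
    (j q r : ι) : Aᵀ *ᵥ crossVec A j q r = 0 := by
  ext i
  simp only [crossVec, mulVec, dotProduct_add, dotProduct_sub, dotProduct_single, transpose_apply,
    rowMinor, Pi.zero_apply]
  fin_cases i <;> simp only [Fin.zero_eta, Fin.mk_one] <;> ring

theorem crossVec_apply_self [CommRing R] [DecidableEq ι] (A : Matrix ι (Fin 2) R) {j q r : ι} (hqj : q ≠ j)
    (hrj : r ≠ j) : crossVec A j q r j = rowMinor A q r := by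
  simp [crossVec, hqj.symm, hrj.symm]

section WeightedDegree

variable {Γ : Type*} [AddCommGroup Γ] [LinearOrder Γ] [IsOrderedAddMonoid Γ] [CommRing R]

theorem min_le_orderTop_rowMinor [NoZeroDivisors R] (A : Matrix ι (Fin 2) (HahnSeries Γ R))
    (p q : ι) :
    min ((A p 0).orderTop + (A q 1).orderTop) ((A q 0).orderTop + (A p 1).orderTop) ≤
      (rowMinor A p q).orderTop := by
  simpa only [rowMinor, orderTop_mul] using
    min_orderTop_le_orderTop_sub (x := A p 0 * A q 1) (y := A q 0 * A p 1)

variable (A : Matrix ι (Fin 2) (HahnSeries Γ R)) (h : ι → Γ) {q r : ι}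

theorem add_le_orderTop_rowMinor_add [NoZeroDivisors R]
    (hq : ∀ μ, (A q 0).orderTop + h q ≤ (A μ 0).orderTop + h μ)
    (hr : ∀ μ, (A r 1).orderTop + h r ≤ (A μ 1).orderTop + h μ) (p p' : ι) :
    (A q 0).orderTop + (A r 1).orderTop + (h q + h r : WithTop Γ) ≤
      (rowMinor A p p').orderTop + (h p + h p' : WithTop Γ) := by
  refine le_trans ?_ (add_le_add_left (min_le_orderTop_rowMinor A p p') _)
  rw [← min_add_add_right]
  refine le_min ?_ ?_
  · calc (A q 0).orderTop + (A r 1).orderTop + (h q + h r : WithTop Γ)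
        = ((A q 0).orderTop + h q) + ((A r 1).orderTop + h r) := by abel
      _ ≤ ((A p 0).orderTop + h p) + ((A p' 1).orderTop + h p') := add_le_add (hq p) (hr p')
      _ = _ := by abel
  · calc (A q 0).orderTop + (A r 1).orderTop + (h q + h r : WithTop Γ)
        = ((A q 0).orderTop + h q) + ((A r 1).orderTop + h r) := by abel
      _ ≤ ((A p' 0).orderTop + h p') + ((A p 1).orderTop + h p) := add_le_add (hq p') (hr p)
      _ = _ := by abel

theorem orderTop_rowMinor_eq
    (hmin : (rowMinor A q r).orderTop =
      min ((A q 0).orderTop + (A r 1).orderTop) ((A r 0).orderTop + (A q 1).orderTop))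
    (hq : ∀ μ, (A q 0).orderTop + h q ≤ (A μ 0).orderTop + h μ)
    (hr : ∀ μ, (A r 1).orderTop + h r ≤ (A μ 1).orderTop + h μ) :
    (rowMinor A q r).orderTop = (A q 0).orderTop + (A r 1).orderTop := by
  refine hmin.trans (min_eq_left ?_)
  refine (WithTop.add_le_add_iff_right (WithTop.coe_ne_top (a := h q + h r))).mp ?_
  calc (A q 0).orderTop + (A r 1).orderTop + ↑(h q + h r)
      = ((A q 0).orderTop + h q) + ((A r 1).orderTop + h r) := by push_cast; abel
    _ ≤ ((A r 0).orderTop + h r) + ((A q 1).orderTop + h q) := add_le_add (hq r) (hr q)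
    _ = _ := by push_cast; abel

theorem add_le_orderTop_crossVec_add [NoZeroDivisors R] [DecidableEq ι]
    (hq : ∀ μ, (A q 0).orderTop + h q ≤ (A μ 0).orderTop + h μ)
    (hr : ∀ μ, (A r 1).orderTop + h r ≤ (A μ 1).orderTop + h μ) {j : ι} (hqr : q ≠ r)
    (hqj : q ≠ j) (hrj : r ≠ j) (l : ι) :
    (A q 0).orderTop + (A r 1).orderTop + h l ≤ (crossVec A j q r l).orderTop + h j := by
  have hB := add_le_orderTop_rowMinor_add A h hq hr
  have cancel : ∀ {a b : WithTop Γ} {x y z : Γ},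
      a + (x + y : WithTop Γ) ≤ b + (z + y : WithTop Γ) → a + x ≤ b + z := fun H =>
    (WithTop.add_le_add_iff_right WithTop.coe_ne_top).mp (by simpa only [add_assoc] using H)
  rcases eq_or_ne l j with rfl | hlj
  · rw [crossVec_apply_self A hqj hrj]
    have hD := (WithTop.add_le_add_iff_right (by simp)).mp (hB q r)
    gcongr
  rcases eq_or_ne l q with rfl | hlq
  · simpa [crossVec, hlj, hqr] using cancel (hB j r)
  rcases eq_or_ne l r with rfl | hlr
  · have hB' := hB j q
    rw [add_comm (h q : WithTop Γ)] at hB'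
    simpa [crossVec, hlj, hlq] using cancel hB'
  · simp [crossVec, hlj, hlq, hlr]

end WeightedDegree

end Matrix

theorem two_equation_system (A : Matrix (Fin 5) (Fin 2) K)
    (hcol : ∀ i : Fin 2, ∃ p : Fin 5, A p i ≠ 0)
    (hmin : ∀ p q : Fin 5, p ≠ q →
      Kdeg (A p 0 * A q 1 - A q 0 * A p 1) =
        min (Kdeg (A p 0) + Kdeg (A q 1)) (Kdeg (A q 0) + Kdeg (A p 1)))
    (h : Fin 5 → ℝ)
    (Θ : Fin 2 → Set (Fin 5))
    (hΘ : ∀ i, Θ i = {η : Fin 5 | ∀ μ : Fin 5,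
      Kdeg (A η i) + (h η : WithTop ℝ) ≤ Kdeg (A μ i) + (h μ : WithTop ℝ)})
    (h1 : 2 ≤ (Θ 0).ncard) (h2 : 2 ≤ (Θ 1).ncard) (h3 : 3 ≤ (Θ 0 ∪ Θ 1).ncard) :
    ∃ x : Fin 5 → K, (∀ j, Kdeg (x j) = (h j : WithTop ℝ)) ∧
      ∀ i : Fin 2, ∑ j, A j i * x j = 0 := by
  simp only [Kdeg_eq_orderTop] at hmin hΘ ⊢
  have hΘmin : ∀ i, ∀ q ∈ Θ i, ∀ μ, (A q i).orderTop + h q ≤ (A μ i).orderTop + h μ :=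
    fun i q hq => by rwa [hΘ i] at hq
  have hΘne : ∀ i, ∀ q ∈ Θ i, A q i ≠ 0 := fun i q hq hzero => by
    obtain ⟨p, hp⟩ := hcol i
    have := hΘmin i q hq p
    simp [hzero, hp] at this
  obtain ⟨x, hxV, hx⟩ := exists_forall_orderTop_eq (LinearMap.ker Aᵀ.mulVecLin) h fun j => by
    obtain ⟨q, hqΘ, r, hrΘ, hqr, hqj, hrj⟩ := Set.exists_mem_mem_ne_of_ncard h1 h2 h3 j
    have hD := orderTop_rowMinor_eq A h (hmin q r hqr) (hΘmin 0 q hqΘ) (hΘmin 1 r hrΘ)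
    have hne : rowMinor A q r ≠ 0 := by
      rw [← orderTop_ne_top, hD]
      simp [hΘne 0 q hqΘ, hΘne 1 r hrΘ]
    obtain ⟨c, hc⟩ := exists_mul_orderTop_eq (y := crossVec A j q r) (h := h)
      (by rwa [crossVec_apply_self A hqj hrj]) (by
        rw [crossVec_apply_self A hqj hrj, hD]
        exact add_le_orderTop_crossVec_add A h (hΘmin 0 q hqΘ) (hΘmin 1 r hrΘ) hqr hqj hrj)
    exact ⟨c • crossVec A j q r, Submodule.smul_mem _ c (transpose_mulVec_crossVec A j q r), hc⟩
  exact ⟨x, hx, congrFun (LinearMap.mem_ker.mp hxV)⟩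

end
end

section
/- Let A ∈ ℝ^{m×n}. If the pattern P(A) contains a k×k submatrix (k > 1) that is 𝔹-tropically non-singular, then k ≤ rk_t(A); that is, the size of any 𝔹-tropically non-singular submatrix of the pattern of A cannot exceed the tropical rank of A. -/
noncomputable section

theorem pat_eq_zero_iff {m n : ℕ} {A : Matrix (Fin m) (Fin n) ℝ} {u : Fin m} {v : Fin n} :
    pat A u v = 0 ↔ ∀ i, A u v ≤ A i v := by
  unfold pat
  split_ifs with h <;> simp [h]

theorem pat_eq_zero_iff_eq {m n : ℕ} {A : Matrix (Fin m) (Fin n) ℝ} {u u' : Fin m} {v : Fin n}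
    (h : pat A u' v = 0) : pat A u v = 0 ↔ A u v = A u' v := by
  rw [pat_eq_zero_iff] at h ⊢
  exact ⟨fun hu => le_antisymm (hu u') (h u), fun hu i => hu ▸ h i⟩

section PermSum

variable {ι R : Type*} [Fintype ι] [AddCommMonoid R] {S : Matrix ι ι R} {b : ι → R}

theorem sum_perm_eq_sum_of_eq (τ : Equiv.Perm ι) (h : ∀ i, S i (τ i) = b (τ i)) :
    ∑ i, S i (τ i) = ∑ j, b j := by
  rw [← Equiv.sum_comp τ b]
  exact Finset.sum_congr rfl fun i _ => h i

variable [PartialOrder R]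

theorem sum_le_sum_perm_of_le [IsOrderedAddMonoid R] (hb : ∀ i j, b j ≤ S i j)
    (τ : Equiv.Perm ι) : ∑ j, b j ≤ ∑ i, S i (τ i) := by
  rw [← Equiv.sum_comp τ b]
  exact Finset.sum_le_sum fun i _ => hb i (τ i)

theorem eq_of_sum_perm_le_sum [IsOrderedCancelAddMonoid R] (hb : ∀ i j, b j ≤ S i j)
    {τ : Equiv.Perm ι} (h : ∑ i, S i (τ i) ≤ ∑ j, b j) (i : ι) : S i (τ i) = b (τ i) := by
  have hsum := le_antisymm (sum_le_sum_perm_of_le hb τ) h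
  rw [← Equiv.sum_comp τ b] at hsum
  exact ((Finset.sum_eq_sum_iff_of_le fun i _ => hb i (τ i)).1 hsum i (Finset.mem_univ i)).symm

end PermSum

/-- Once some permutation meets the column bounds `b`, the minimizers of the tropical permanent
are exactly the permutations meeting them. -/
theorem tropNonsing_of_existsUnique_eq {k : ℕ} {S : Matrix (Fin k) (Fin k) ℝ} {b : Fin k → ℝ}
    (hb : ∀ i j, b j ≤ S i j) (h : ∃! σ : Equiv.Perm (Fin k), ∀ i, S i (σ i) = b (σ i)) :
    TropNonsing S := by
  obtain ⟨σ, hσ, huniq⟩ := h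
  have hσsum := sum_perm_eq_sum_of_eq σ hσ
  refine ⟨σ, fun τ => hσsum ▸ sum_le_sum_perm_of_le hb τ, fun τ hτ => ?_⟩
  exact huniq τ (eq_of_sum_perm_le_sum hb (hσsum ▸ hτ σ))

/-- The column minima of `A` at the columns `c` bound the submatrix from below; the pattern
records where they are attained. -/
theorem tropNonsing_submatrix_of_existsUnique_pat {m n k : ℕ} {A : Matrix (Fin m) (Fin n) ℝ}
    {ρ : Fin k → Fin m} {c : Fin k → Fin n}
    (hns : ∃! σ : Equiv.Perm (Fin k), ∀ i, pat A (ρ i) (c (σ i)) = 0) :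
    TropNonsing (A.submatrix ρ c) := by
  obtain ⟨σ, hσ, huniq⟩ := hns
  have hσ' (j : Fin k) : pat A (ρ (σ.symm j)) (c j) = 0 := by simpa using hσ (σ.symm j)
  have hpat (τ : Equiv.Perm (Fin k)) (i : Fin k) :
      pat A (ρ i) (c (τ i)) = 0 ↔ A (ρ i) (c (τ i)) = A (ρ (σ.symm (τ i))) (c (τ i)) :=
    pat_eq_zero_iff_eq (hσ' (τ i))
  refine tropNonsing_of_existsUnique_eq (b := fun j => A (ρ (σ.symm j)) (c j))
    (fun i j => pat_eq_zero_iff.1 (hσ' j) (ρ i)) ⟨σ, fun i => (hpat σ i).1 (hσ i), ?_⟩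
  exact fun τ hτ => huniq τ fun i => (hpat τ i).2 (hτ i)

theorem le_tropRank_of_tropNonsing {m n k : ℕ} {A : Matrix (Fin m) (Fin n) ℝ}
    {ρ : Fin k → Fin m} {c : Fin k → Fin n} (hρ : Function.Injective ρ)
    (hc : Function.Injective c) (h : TropNonsing (A.submatrix ρ c)) : k ≤ tropRank A := by
  refine le_csSup ⟨m, ?_⟩ ⟨ρ, c, hρ, hc, h⟩
  rintro r ⟨ρ', -, hρ', -⟩
  simpa using Fintype.card_le_of_injective ρ' hρ'

theorem pattern_nonsingular_le_tropRank_general (m n k : ℕ)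
    (A : Matrix (Fin m) (Fin n) ℝ)
    (ρ : Fin k → Fin m) (c : Fin k → Fin n)
    (hρ : Function.Injective ρ) (hc : Function.Injective c)
    (hns : ∃! σ : Equiv.Perm (Fin k), ∀ i, pat A (ρ i) (c (σ i)) = 0) :
    k ≤ tropRank A :=
  le_tropRank_of_tropNonsing hρ hc (tropNonsing_submatrix_of_existsUnique_pat hns)

theorem pattern_nonsingular_le_tropRank (m n k : ℕ) (hk : 1 < k)
    (A : Matrix (Fin m) (Fin n) ℝ)
    (ρ : Fin k → Fin m) (c : Fin k → Fin n)
    (hρ : Function.Injective ρ) (hc : Function.Injective c)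
    (hns : ∃! σ : Equiv.Perm (Fin k), ∀ i, pat A (ρ i) (c (σ i)) = 0) :
    k ≤ tropRank A :=
  pattern_nonsingular_le_tropRank_general m n k A ρ c hρ hc hns

end
end
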